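/- Let G = Z_{𝕞}² with 𝕞 ≥ 1, m = 𝕞², and consider the cyclic group Z_m = ⟨g⟩ with projection π : Z_m → Z_𝕞 = ⟨𝕘⟩, g ↦ 𝕘. For any 3-cocycle σ on Z_𝕞 of the form σ(𝕘^i, 𝕘^j, 𝕘^k) = ζ_𝕞^{a·i·⌊(j+k)/𝕞⌋} (0 ≤ i,j,k < 𝕞, 0 ≤ a < 𝕞), the pull-back π*(σ) is a 3-coboundary on Z_m; explicitly, π*(σ) = ∂J for J(g^x, g^y) = ζ_m^{a·x·(y − y')} where y' is the remainder of y modulo 𝕞 and 0 ≤ x, y < m. -/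
import Mathlib


/-- A fixed primitive `m`-th root of unity in `ℂ`: `ζ_m = e^{2πi/m}`. -/
noncomputable def zeta (m : ℕ) : ℂ :=
  Complex.exp (2 * (Real.pi : ℂ) * Complex.I / (m : ℂ))

lemma zeta_ne_zero (m : ℕ) : zeta m ≠ 0 := Complex.exp_ne_zero _

lemma zeta_pow_self (m : ℕ) (hm : m ≠ 0) : zeta m ^ (m : ℤ) = 1 := by
  have h : (m:ℂ) ≠ 0 := Nat.cast_ne_zero.mpr hm
  rw [zpow_natCast, zeta, ← Complex.exp_nat_mul]
  rw [show (m:ℂ) * (2 * (Real.pi : ℂ) * Complex.I / (m : ℂ)) = 2 * Real.pi * Complex.I by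
    field_simp]
  exact Complex.exp_two_pi_mul_I

lemma zeta_congr {m : ℕ} (hm : m ≠ 0) {a b : ℤ} (h : (m:ℤ) ∣ a - b) :
    zeta m ^ a = zeta m ^ b := by
  obtain ⟨k, hk⟩ := h
  have ha : a = b + m * k := by linarith
  rw [ha, zpow_add₀ (zeta_ne_zero m), zpow_mul, zeta_pow_self m hm, one_zpow, mul_one]

lemma zeta_sq (mm : ℕ) (hmm : mm ≠ 0) : zeta mm = zeta (mm ^ 2) ^ mm := by
  have h : (mm:ℂ) ≠ 0 := Nat.cast_ne_zero.mpr hmm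
  rw [zeta, zeta, ← Complex.exp_nat_mul]
  congr 1
  push_cast
  field_simp

/-- For the cyclic group `Z_𝕞` and the 3-cocycle `σ(g^i,g^j,g^k) = ζ_𝕞^{a·i·⌊(j+k)/𝕞⌋}`,
the pull-back along `π : Z_{𝕞²} → Z_𝕞` is the coboundary of
`J(g^x,g^y) = ζ_{𝕞²}^{a·x·(y − y mod 𝕞)}`. -/
theorem stmt_12 (mm : ℕ) (hmm : 1 ≤ mm) (a : ℕ) (ha : a < mm) :
    ∀ x y z : ZMod (mm ^ 2),
      zeta mm ^ (a * ((x.val : ZMod mm)).val *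
          ((((y.val : ZMod mm)).val + (((z.val : ZMod mm))).val) / mm)) =
        (zeta (mm ^ 2) ^ (a * y.val * (z.val - z.val % mm))) *
          (zeta (mm ^ 2) ^ (a * x.val * ((y + z).val - (y + z).val % mm))) *
          (zeta (mm ^ 2) ^ (a * (x + y).val * (z.val - z.val % mm)))⁻¹ *
          (zeta (mm ^ 2) ^ (a * x.val * (y.val - y.val % mm)))⁻¹ := by
  intro x y z
  haveI : NeZero mm := ⟨by omega⟩
  haveI : NeZero (mm ^ 2) := ⟨by positivity⟩
  have hmm0 : mm ≠ 0 := by omega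
  have hm0 : mm ^ 2 ≠ 0 := by positivity
  have hζ : zeta (mm ^ 2) ≠ 0 := zeta_ne_zero _
  set X := x.val with hXdef
  set Y := y.val with hYdef
  set Z := z.val with hZdef
  rw [ZMod.val_natCast (X) (n := mm), ZMod.val_natCast (Y) (n := mm),
    ZMod.val_natCast (Z) (n := mm)]
  rw [zeta_sq mm hmm0, ← pow_mul]
  simp only [← zpow_natCast (zeta (mm ^ 2)), ← zpow_neg, ← zpow_add₀ hζ]
  apply zeta_congr hm0
  set W := (y + z).val with hWdef
  set V := (x + y).val with hVdef
  -- named quotients and remainders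
  set xq := X / mm with hxq; set xr := X % mm with hxr
  set yq := Y / mm with hyq; set yr := Y % mm with hyr
  set zq := Z / mm with hzq; set zr := Z % mm with hzr
  set d := (yr + zr) / mm with hdq; set s := (yr + zr) % mm with hds
  set e1 := (Y + Z) / mm ^ 2 with he1
  set e2 := (X + Y) / mm ^ 2 with he2
  -- basic euclidean identities over ℤ
  have hx : (X : ℤ) = mm * xq + xr := by exact_mod_cast (Nat.div_add_mod X mm).symm
  have hy : (Y : ℤ) = mm * yq + yr := by exact_mod_cast (Nat.div_add_mod Y mm).symm
  have hz : (Z : ℤ) = mm * zq + zr := by exact_mod_cast (Nat.div_add_mod Z mm).symm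
  have hd : ((yr : ℤ) + zr) = mm * d + s := by
    exact_mod_cast (Nat.div_add_mod (yr + zr) mm).symm
  have hW : (W : ℤ) = (Y : ℤ) + Z - (mm:ℤ) ^ 2 * e1 := by
    have h1 : W + mm ^ 2 * e1 = Y + Z := by
      rw [hWdef, ZMod.val_add, ← hYdef, ← hZdef, he1]
      exact Nat.mod_add_div (Y + Z) (mm ^ 2)
    have := congrArg (Nat.cast (R := ℤ)) h1
    push_cast at this
    linarith
  have hV : (V : ℤ) = (X : ℤ) + Y - (mm:ℤ) ^ 2 * e2 := by
    have h1 : V + mm ^ 2 * e2 = X + Y := by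
      rw [hVdef, ZMod.val_add, ← hXdef, ← hYdef, he2]
      exact Nat.mod_add_div (X + Y) (mm ^ 2)
    have := congrArg (Nat.cast (R := ℤ)) h1
    push_cast at this
    linarith
  have hWm : W % mm = s := by
    rw [hWdef, ZMod.val_add, ← hYdef, ← hZdef, hds, hyr, hzr,
      Nat.mod_mod_of_dvd _ (dvd_pow_self mm two_ne_zero), Nat.add_mod]
  -- casts of the truncated subtractions
  have hsub1 : ((Z - zr : ℕ) : ℤ) = (mm : ℤ) * zq := by
    have h1 : Z - zr = mm * zq := by
      rw [hzr, hzq]; exact (Nat.eq_sub_of_add_eq (Nat.div_add_mod Z mm)).symm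
    rw [h1]; push_cast; ring
  have hsub2 : ((Y - yr : ℕ) : ℤ) = (mm : ℤ) * yq := by
    have h1 : Y - yr = mm * yq := by
      rw [hyr, hyq]; exact (Nat.eq_sub_of_add_eq (Nat.div_add_mod Y mm)).symm
    rw [h1]; push_cast; ring
  have hsub3 : ((W - W % mm : ℕ) : ℤ) = (W : ℤ) - s := by
    have h2 : W % mm ≤ W := Nat.mod_le _ _
    rw [Nat.cast_sub h2, hWm]
  have hxr' : (xr : ℤ) = (X : ℤ) - mm * xq := by linarith
  have hs' : (s : ℤ) = (yr : ℤ) + zr - mm * d := by linarith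
  -- the divisibility
  rw [Nat.cast_pow]
  refine ⟨(a:ℤ) * X * e1 - (a:ℤ) * mm * e2 * zq - (a:ℤ) * xq * d, ?_⟩
  push_cast [hsub1, hsub2, hsub3, hW, hV, hxr', hs']
  linear_combination (-(a:ℤ) * X) * hy + (-(a:ℤ) * X) * hz
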